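/- arXiv:2507.16215 — 6 statements merged into one kernel-verified Lean document; each statement's English description precedes it below -/
import Mathlib

section
/- Let d ≥ 1 and let β : Fin d → ℝ be such that every partial sum c_k := β_0 + β_1 + ⋯ + β_k is strictly positive (0 ≤ k ≤ d−1). Then the family of real numbers exp(q_0·β_0 + q_1·β_1 + ⋯ + q_{d−1}·β_{d−1}), indexed by the set of integer tuples q : Fin d → ℤ that are strictly increasing and satisfy q_{d−1} < 0, is summable, and its sum equals exp(−∑_{k=0}^{d−1} (d−k)·β_k) / ∏_{k=0}^{d−1} (1 − exp(−c_k)). -/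
lemma aux_geom (n : ℕ) (r : Fin n → ℝ) (hr : ∀ i, 0 ≤ r i) (h1 : ∀ i, r i < 1) :
    Summable (fun a : Fin n → ℕ => ∏ i, r i ^ a i) ∧
    ∑' a : Fin n → ℕ, ∏ i, r i ^ a i = ∏ i, (1 - r i)⁻¹ := by
  induction n with
  | zero =>
    constructor
    · exact Summable.of_finite
    · simp [tsum_eq_single (fun i : Fin 0 => 0) (by intro b hb; exact absurd (funext fun i => i.elim0) hb)]
  | succ n ih =>
    obtain ⟨hs, ht⟩ := ih (fun i => r i.succ) (fun i => hr _) (fun i => h1 _)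
    have hgeo := summable_geometric_of_lt_one (hr 0) (h1 0)
    have hgeot := tsum_geometric_of_lt_one (hr 0) (h1 0)
    set e : ℕ × (Fin n → ℕ) ≃ (Fin (n+1) → ℕ) :=
      (Fin.consEquiv (fun _ : Fin (n+1) => ℕ)) with he
    have hcomp : ∀ z : ℕ × (Fin n → ℕ),
        (∏ i, r i ^ (e z) i) = (r 0 ^ z.1) * ∏ i : Fin n, (r i.succ) ^ z.2 i := by
      intro z
      rw [Fin.prod_univ_succ]
      simp [he, Fin.consEquiv]
    have h2 : (0:ℕ → ℝ) ≤ fun k => r 0 ^ k := fun x => pow_nonneg (hr 0) x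
    have h3 : (0: (Fin n → ℕ) → ℝ) ≤ fun a => ∏ i, (r i.succ) ^ a i :=
      fun a => Finset.prod_nonneg fun i _ => pow_nonneg (hr _) _
    have hmul : Summable (fun z : ℕ × (Fin n → ℕ) =>
        (r 0 ^ z.1) * ∏ i : Fin n, (r i.succ) ^ z.2 i) :=
      Summable.mul_of_nonneg (f := fun k : ℕ => r 0 ^ k)
        (g := fun a : Fin n → ℕ => ∏ i, (r i.succ) ^ a i) hgeo hs h2 h3
    have hsum : Summable (fun a : Fin (n+1) → ℕ => ∏ i, r i ^ a i) := by
      rw [← e.summable_iff]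
      exact hmul.congr fun z => (hcomp z).symm
    refine ⟨hsum, ?_⟩
    rw [← e.tsum_eq, tsum_congr hcomp,
      ← Summable.tsum_mul_tsum (f := fun k : ℕ => r 0 ^ k)
        (g := fun a : Fin n → ℕ => ∏ i, (r i.succ) ^ a i) hgeo hs hmul,
      hgeot, ht, Fin.prod_univ_succ]
section Main
variable {d : ℕ}

private def Smap (a : Fin d → ℕ) (k : Fin d) : ℤ := ∑ j ∈ Finset.Ici k, (a j : ℤ)

private def Fmap (a : Fin d → ℕ) (k : Fin d) : ℤ := (k:ℤ) - (d:ℤ) - Smap a k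

private lemma ici_insert' (k : Fin d) (h : (k:ℕ)+1 < d) :
    Finset.Ici k = insert k (Finset.Ici (⟨(k:ℕ)+1, h⟩ : Fin d)) := by
  ext j
  have := j.2
  simp only [Finset.mem_Ici, Finset.mem_insert, Fin.le_def, Fin.ext_iff]
  omega

private lemma not_mem_ici' (k : Fin d) (h : (k:ℕ)+1 < d) :
    k ∉ Finset.Ici (⟨(k:ℕ)+1, h⟩ : Fin d) := by
  simp only [Finset.mem_Ici, Fin.le_def]
  omega

private lemma S_rec' (a : Fin d → ℕ) (k : Fin d) (h : (k:ℕ)+1 < d) :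
    Smap a k = (a k : ℤ) + Smap a (⟨(k:ℕ)+1, h⟩ : Fin d) := by
  unfold Smap
  rw [ici_insert' k h, Finset.sum_insert (not_mem_ici' k h)]

private lemma S_last' (a : Fin d → ℕ) (k : Fin d) (hk : (k:ℕ) = d - 1) :
    Smap a k = (a k : ℤ) := by
  unfold Smap
  have : Finset.Ici k = {k} := by
    ext j
    have := j.2
    have := k.2
    simp only [Finset.mem_Ici, Finset.mem_singleton, Fin.le_def, Fin.ext_iff]
    omega
  rw [this, Finset.sum_singleton]

private lemma S_nonneg' (a : Fin d → ℕ) (k : Fin d) : (0:ℤ) ≤ Smap a k :=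
  Finset.sum_nonneg fun j _ => Int.natCast_nonneg _

private lemma S_anti' (a : Fin d → ℕ) {k l : Fin d} (hkl : k ≤ l) :
    Smap a l ≤ Smap a k :=
  Finset.sum_le_sum_of_subset_of_nonneg (Finset.Ici_subset_Ici.mpr hkl)
    (fun j _ _ => Int.natCast_nonneg _)

private lemma F_mono (a : Fin d → ℕ) : StrictMono (Fmap a) := by
  intro k l hkl
  have h1 : Smap a l ≤ Smap a k := S_anti' a hkl.le
  have h2 : (k:ℤ) < (l:ℤ) := by exact_mod_cast hkl
  unfold Fmap
  omega

private lemma F_last (hd : 1 ≤ d) (a : Fin d → ℕ) : Fmap a (⟨d-1, Nat.sub_lt hd Nat.one_pos⟩ : Fin d) < 0 := by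
  have h1 := S_nonneg' a (⟨d-1, Nat.sub_lt hd Nat.one_pos⟩ : Fin d)
  unfold Fmap
  have h2 : (((⟨d-1, Nat.sub_lt hd Nat.one_pos⟩ : Fin d) : ℕ) : ℤ) = (d:ℤ) - 1 := by
    simp only [Fin.val_mk]
    omega
  omega

private lemma F_inj (hd : 1 ≤ d) : Function.Injective (Fmap (d := d)) := by
  intro a a' h
  have hS : ∀ k, Smap a k = Smap a' k := by
    intro k
    have := congrFun h k
    unfold Fmap at this
    omega
  funext k
  by_cases h1 : (k:ℕ)+1 < d
  · have e1 := S_rec' a k h1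
    have e2 := S_rec' a' k h1
    have f1 := hS k
    have f2 := hS ⟨(k:ℕ)+1, h1⟩
    omega
  · have hk : (k:ℕ) = d - 1 := by
      have := k.2
      omega
    have e1 := S_last' a k hk
    have e2 := S_last' a' k hk
    have f1 := hS k
    omega

private lemma F_surj (hd : 1 ≤ d) (q : Fin d → ℤ) (hq : StrictMono q)
    (hql : q (⟨d-1, Nat.sub_lt hd Nat.one_pos⟩ : Fin d) < 0) : ∃ a : Fin d → ℕ, Fmap a = q := by
  classical
  refine ⟨fun k =>
    if h : (k:ℕ)+1 < d then (q ⟨(k:ℕ)+1, h⟩ - q k - 1).toNat else (-1 - q k).toNat, ?_⟩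
  set a : Fin d → ℕ := fun k =>
    if h : (k:ℕ)+1 < d then (q ⟨(k:ℕ)+1, h⟩ - q k - 1).toNat else (-1 - q k).toNat with ha
  have key : ∀ m : ℕ, ∀ k : Fin d, d - 1 - (k:ℕ) ≤ m → Smap a k = (k:ℤ) - (d:ℤ) - q k := by
    intro m
    induction m with
    | zero =>
      intro k hk
      have hk2 := k.2
      have hkl : (k:ℕ) = d - 1 := by omega
      have hqk : q k < 0 := by
        have hkk : k = (⟨d - 1, Nat.sub_lt hd Nat.one_pos⟩ : Fin d) := by
          apply Fin.ext
          simpa using hkl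
        rw [hkk]
        exact hql
      have e1 := S_last' a k hkl
      have e2 : a k = (-1 - q k).toNat := by
        simp only [ha]
        rw [dif_neg (by omega)]
      have e3 : (((-1 - q k).toNat : ℕ) : ℤ) = -1 - q k := by omega
      rw [e1, e2, e3]
      omega
    | succ m ih =>
      intro k hk
      by_cases h1 : (k:ℕ)+1 < d
      · have hlt : q k < q ⟨(k:ℕ)+1, h1⟩ := hq (by simp [Fin.lt_def])
        have e1 := S_rec' a k h1
        have e2 : a k = (q ⟨(k:ℕ)+1, h1⟩ - q k - 1).toNat := by
          simp only [ha]
          rw [dif_pos h1]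
        have e3 : (((q ⟨(k:ℕ)+1, h1⟩ - q k - 1).toNat : ℕ) : ℤ)
            = q ⟨(k:ℕ)+1, h1⟩ - q k - 1 := by omega
        have e4 : Smap a ⟨(k:ℕ)+1, h1⟩ = ((⟨(k:ℕ)+1, h1⟩ : Fin d):ℤ) - (d:ℤ)
            - q ⟨(k:ℕ)+1, h1⟩ := ih ⟨(k:ℕ)+1, h1⟩ (by simp only [Fin.val_mk]; omega)
        have e5 : (((⟨(k:ℕ)+1, h1⟩ : Fin d) : ℕ) : ℤ) = (k:ℤ) + 1 := by
          simp only [Fin.val_mk]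
          omega
        rw [e1, e2, e3, e4, e5]
        ring
      · have hk2 := k.2
        have hkl : (k:ℕ) = d - 1 := by omega
        have hqk : q k < 0 := by
          have hkk : k = (⟨d - 1, Nat.sub_lt hd Nat.one_pos⟩ : Fin d) := by
            apply Fin.ext
            simpa using hkl
          rw [hkk]
          exact hql
        have e1 := S_last' a k hkl
        have e2 : a k = (-1 - q k).toNat := by
          simp only [ha]
          rw [dif_neg (by omega)]
        have e3 : (((-1 - q k).toNat : ℕ) : ℤ) = -1 - q k := by omega
        rw [e1, e2, e3]
        omega
  funext k
  have := key (d - 1 - (k:ℕ)) k le_rfl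
  unfold Fmap
  omega

private lemma F_sum (β : Fin d → ℝ) (a : Fin d → ℕ) :
    ∑ k : Fin d, ((Fmap a k : ℤ) : ℝ) * β k
      = (-∑ k : Fin d, ((d - (k : ℕ) : ℕ) : ℝ) * β k)
        - ∑ j : Fin d, (a j : ℝ) * (∑ i ∈ Finset.Iic j, β i) := by
  have step1 : ∀ k : Fin d, ((Fmap a k : ℤ) : ℝ) * β k
      = (-(((d - (k : ℕ) : ℕ) : ℝ)) * β k) - ((Smap a k : ℤ) : ℝ) * β k := by
    intro k
    have hk2 : (k:ℕ) ≤ d := k.2.le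
    have hcast : ((d - (k : ℕ) : ℕ) : ℝ) = (d:ℝ) - ((k:ℕ):ℝ) := by
      rw [Nat.cast_sub hk2]
    unfold Fmap
    push_cast
    rw [hcast]
    ring
  rw [Finset.sum_congr rfl fun k _ => step1 k, Finset.sum_sub_distrib]
  have step2 : ∑ k : Fin d, ((Smap a k : ℤ) : ℝ) * β k
      = ∑ j : Fin d, (a j : ℝ) * (∑ i ∈ Finset.Iic j, β i) := by
    have e1 : ∀ k : Fin d, ((Smap a k : ℤ) : ℝ) * β k
        = ∑ j ∈ Finset.Ici k, (a j : ℝ) * β k := by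
      intro k
      unfold Smap
      push_cast
      rw [Finset.sum_mul]
    rw [Finset.sum_congr rfl fun k _ => e1 k]
    rw [Finset.sum_comm' (s := Finset.univ) (t := fun k : Fin d => Finset.Ici k)
      (t' := Finset.univ) (s' := fun j : Fin d => Finset.Iic j)
      (by intro x y; simp [Finset.mem_Ici, Finset.mem_Iic])]
    exact Finset.sum_congr rfl fun j _ => by rw [Finset.mul_sum]
  rw [step2]
  simp only [neg_mul, Finset.sum_neg_distrib]

end Main

theorem stmt_0 (d : ℕ) (hd : 1 ≤ d) (β : Fin d → ℝ)
    (hpos : ∀ k : Fin d, 0 < ∑ j ∈ Finset.Iic k, β j) :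
    Summable (fun q : {q : Fin d → ℤ // StrictMono q ∧ q ⟨d - 1, by omega⟩ < 0} =>
        Real.exp (∑ k : Fin d, (q.1 k : ℝ) * β k)) ∧
      ∑' q : {q : Fin d → ℤ // StrictMono q ∧ q ⟨d - 1, by omega⟩ < 0},
          Real.exp (∑ k : Fin d, (q.1 k : ℝ) * β k) =
        Real.exp (-∑ k : Fin d, ((d - (k : ℕ) : ℕ) : ℝ) * β k) /
          ∏ k : Fin d, (1 - Real.exp (-(∑ j ∈ Finset.Iic k, β j))) := by
  classical
  have hr0 : ∀ k : Fin d, 0 ≤ Real.exp (-(∑ j ∈ Finset.Iic k, β j)) :=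
    fun k => (Real.exp_pos _).le
  have hr1 : ∀ k : Fin d, Real.exp (-(∑ j ∈ Finset.Iic k, β j)) < 1 :=
    fun k => Real.exp_lt_one_iff.mpr (by linarith [hpos k])
  obtain ⟨hsa, hta⟩ := aux_geom d (fun k => Real.exp (-(∑ j ∈ Finset.Iic k, β j))) hr0 hr1
  set C : ℝ := Real.exp (-∑ k : Fin d, ((d - (k : ℕ) : ℕ) : ℝ) * β k) with hC
  have hF' : ∀ a : Fin d → ℕ, StrictMono (Fmap a) ∧ Fmap a (⟨d - 1, by omega⟩ : Fin d) < 0 :=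
    fun a => ⟨F_mono a, F_last hd a⟩
  set F' : (Fin d → ℕ) → {q : Fin d → ℤ // StrictMono q ∧ q ⟨d - 1, by omega⟩ < 0} :=
    fun a => ⟨Fmap a, hF' a⟩ with hF'def
  have hbij : Function.Bijective F' := by
    constructor
    · intro a a' h
      exact F_inj hd (congrArg Subtype.val h)
    · rintro ⟨q, hq, hql⟩
      obtain ⟨a, haq⟩ := F_surj hd q hq hql
      exact ⟨a, Subtype.ext haq⟩
  set E := Equiv.ofBijective F' hbij with hE
  have hpt : ∀ a : Fin d → ℕ,
      Real.exp (∑ k : Fin d, (((E a).1 k : ℤ) : ℝ) * β k)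
        = C * ∏ j : Fin d, (Real.exp (-(∑ i ∈ Finset.Iic j, β i))) ^ a j := by
    intro a
    have hEa : (E a).1 = Fmap a := rfl
    rw [hEa, F_sum β a, sub_eq_add_neg, Real.exp_add]
    congr 1
    rw [show -∑ j : Fin d, (a j : ℝ) * (∑ i ∈ Finset.Iic j, β i)
        = ∑ j : Fin d, ((a j : ℕ) : ℝ) * (-(∑ i ∈ Finset.Iic j, β i)) by
      rw [← Finset.sum_neg_distrib]
      exact Finset.sum_congr rfl fun j _ => by ring]
    rw [Real.exp_sum]
    exact Finset.prod_congr rfl fun j _ => Real.exp_nat_mul _ _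
  have hsum : Summable (fun q : {q : Fin d → ℤ // StrictMono q ∧ q ⟨d - 1, by omega⟩ < 0} =>
      Real.exp (∑ k : Fin d, (q.1 k : ℝ) * β k)) := by
    rw [← E.summable_iff]
    exact (hsa.mul_left C).congr fun a => (hpt a).symm
  refine ⟨hsum, ?_⟩
  rw [← E.tsum_eq, tsum_congr hpt, tsum_mul_left, hta]
  rw [Finset.prod_inv_distrib, div_eq_mul_inv]
end

section
/- Let J be a finite index set, n : J → ℝ coefficients, a : J → ℝ exponents, and m ∈ ℕ. Assume the moment-vanishing condition ∑_{j ∈ J} n_j · (a_j)^i = 0 for every natural number i < m. Then the limit as the natural number t tends to infinity of t^m · ∑_{j ∈ J} n_j · exp(a_j / t) exists and equals (1/m!) · ∑_{j ∈ J} n_j · (a_j)^m. -/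
open Filter Finset Real

lemma key_aux (m : ℕ) (c : ℝ) :
    Tendsto (fun t : ℕ => (t:ℝ)^m *
      (Real.exp (c/t) - ∑ i ∈ Finset.range (m+1), (c/t)^i / i.factorial))
      atTop (nhds 0) := by
  set C : ℝ := |c| ^ (m+1) * ((m+2) / ((m+1).factorial * (m+1)))
  have hC : 0 ≤ C := by positivity
  refine squeeze_zero_norm' ?_ (tendsto_const_div_atTop_nhds_zero_nat C)
  · filter_upwards [eventually_ge_atTop (⌈|c|⌉₊ + 1)] with t ht
    have ht1 : (1:ℝ) ≤ t := by
      have : 1 ≤ t := le_trans (Nat.le_add_left 1 _) ht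
      exact_mod_cast this
    have htpos : (0:ℝ) < t := lt_of_lt_of_le one_pos ht1
    have hct : |c / t| ≤ 1 := by
      rw [abs_div, abs_of_pos htpos, div_le_one htpos]
      calc |c| ≤ ⌈|c|⌉₊ := Nat.le_ceil _
        _ ≤ t := by exact_mod_cast le_trans (Nat.le_add_right _ 1) ht
    have hb := Real.exp_bound hct (n := m+1) (Nat.succ_pos m)
    rw [norm_mul, norm_pow, Real.norm_natCast, Real.norm_eq_abs]
    calc (t:ℝ)^m * |Real.exp (c/t) - ∑ i ∈ Finset.range (m+1), (c/t)^i / i.factorial|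
        ≤ (t:ℝ)^m * (|c/t| ^ (m+1) * ((m+1+1) / ((m+1).factorial * (m+1)))) := by
          apply mul_le_mul_of_nonneg_left _ (by positivity)
          exact_mod_cast hb
      _ = C / t := by
          rw [abs_div, abs_of_pos htpos, div_pow]
          simp only [C]
          field_simp
          ring

theorem stmt_1 {J : Type*} [Fintype J] (n a : J → ℝ) (m : ℕ)
    (h : ∀ i : ℕ, i < m → ∑ j : J, n j * a j ^ i = 0) :
    Filter.Tendsto
      (fun t : ℕ => (t : ℝ) ^ m * ∑ j : J, n j * Real.exp (a j / (t : ℝ)))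
      Filter.atTop
      (nhds ((1 / (Nat.factorial m : ℝ)) * ∑ j : J, n j * a j ^ m)) := by
  set L : ℝ := (1 / (Nat.factorial m : ℝ)) * ∑ j : J, n j * a j ^ m
  have main : Tendsto (fun t : ℕ => (∑ j : J, n j *
      ((t:ℝ)^m * (Real.exp (a j/t) - ∑ i ∈ Finset.range (m+1), (a j/t)^i / i.factorial))) + L)
      atTop (nhds L) := by
    have h0 : Tendsto (fun t : ℕ => ∑ j : J, n j *
        ((t:ℝ)^m * (Real.exp (a j/t) - ∑ i ∈ Finset.range (m+1), (a j/t)^i / i.factorial)))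
        atTop (nhds 0) := by
      have := tendsto_finset_sum (Finset.univ : Finset J)
        (fun j _ => (key_aux m (a j)).const_mul (n j))
      simpa using this
    simpa using h0.add (tendsto_const_nhds (x := L))
  apply main.congr'
  filter_upwards [eventually_ge_atTop 1] with t ht
  have htpos : (0:ℝ) < t := by exact_mod_cast ht
  have htne : (t:ℝ) ≠ 0 := ne_of_gt htpos
  -- key algebraic identity
  have expand : ∀ j : J, n j *
      ((t:ℝ)^m * (Real.exp (a j/t) - ∑ i ∈ Finset.range (m+1), (a j/t)^i / i.factorial))
    = (t:ℝ)^m * (n j * Real.exp (a j/t))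
      - ∑ i ∈ Finset.range (m+1), (n j * a j ^ i) * ((t:ℝ)^m / (t:ℝ)^i / i.factorial) := by
    intro j
    rw [mul_sub, Finset.mul_sum, mul_sub]
    congr 1
    · ring
    rw [Finset.mul_sum]
    apply Finset.sum_congr rfl
    intro i hi
    rw [div_pow]
    field_simp
  rw [Finset.sum_congr rfl (fun j _ => expand j), Finset.sum_sub_distrib,
    ← Finset.mul_sum, Finset.sum_comm]
  have hswap : ∑ i ∈ Finset.range (m+1), ∑ j : J,
      (n j * a j ^ i) * ((t:ℝ)^m / (t:ℝ)^i / i.factorial)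
      = L := by
    rw [Finset.sum_range_succ]
    have hzero : ∀ i ∈ Finset.range m, ∑ j : J,
        (n j * a j ^ i) * ((t:ℝ)^m / (t:ℝ)^i / i.factorial) = 0 := by
      intro i hi
      rw [← Finset.sum_mul, h i (Finset.mem_range.mp hi), zero_mul]
    rw [Finset.sum_eq_zero hzero, zero_add, ← Finset.sum_mul, div_self (pow_ne_zero m htne)]
    simp only [L, one_div]
    ring
  rw [hswap]
  ring
end

section
/- Let N ∈ ℕ, let b : Fin N → ℝ with b_i ≠ 0 for every i, let J be a finite index set, n : J → ℝ, a : J → ℝ, and let m ≤ N be a natural number with ∑_{j ∈ J} n_j · (a_j)^i = 0 for every natural number i < m. Then, as the natural number t tends to infinity, the quantity t^{m−N} · (∑_{j ∈ J} n_j exp(a_j/t)) / ∏_{i=0}^{N−1} (1 − exp(−b_i/t)) converges to ((1/m!) ∑_{j ∈ J} n_j (a_j)^m) / ∏_{i=0}^{N−1} b_i. (Note that 1 − exp(−b_i/t) ≠ 0 for every t ≥ 1 since b_i ≠ 0, so the expression is well defined.) -/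
/-!
Each factor `t (1 - exp (-bᵢ/t))` tends to `bᵢ` (a derivative of `exp` at `0`), so it suffices to
show `t^m ∑ⱼ nⱼ exp (aⱼ/t) → (1/m!) ∑ⱼ nⱼ aⱼ^m`. The vanishing moments `∑ⱼ nⱼ aⱼ^i = 0`, `i < m`,
let us subtract from each `exp (aⱼ/t)` its Taylor polynomial of degree `< m` at no cost; what
remains is `t^m ((aⱼ/t)^m/m! + o(t^{-m}))`.
-/
open Filter Real Finset Topology Asymptotics
open scoped Nat

theorem tendsto_mul_one_sub_exp_neg_div (c : ℝ) :
    Tendsto (fun x : ℝ => x * (1 - exp (-c / x))) atTop (𝓝 c) := by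
  have hderiv : HasDerivAt (fun y : ℝ => 1 - exp (-c * y)) c 0 := by
    simpa using ((hasDerivAt_id (0 : ℝ)).const_mul (-c)).exp.const_sub 1
  refine ((hasDerivAt_iff_tendsto_slope.mp hderiv).comp
    (tendsto_inv_atTop_nhdsGT_zero.mono_right (nhdsWithin_mono _ fun _ h => ne_of_gt h))).congr
    fun x => ?_
  simp [slope_def_field, div_eq_mul_inv, mul_comm]

theorem sum_mul_sum_range_mul_pow_eq_zero {R J : Type*} [CommSemiring R] [Fintype J]
    (n a : J → R) {m : ℕ} (h : ∀ i < m, ∑ j, n j * a j ^ i = 0) (c : ℕ → R) :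
    ∑ j, n j * ∑ i ∈ range m, c i * a j ^ i = 0 := by
  simp_rw [mul_sum]
  rw [sum_comm]
  refine sum_eq_zero fun i hi => ?_
  rw [← mul_zero (c i), ← h i (mem_range.mp hi), mul_sum]
  exact sum_congr rfl fun j _ => by ring

theorem tendsto_pow_mul_exp_div_sub_sum_range (m : ℕ) (a : ℝ) :
    Tendsto (fun x : ℝ => x ^ m * (exp (a / x) - ∑ i ∈ range m, (a / x) ^ i / i !))
      atTop (𝓝 (a ^ m / m !)) := by
  have hlo : (fun x : ℝ => exp (a / x) - ∑ i ∈ range (m + 1), (a / x) ^ i / i !)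
      =o[atTop] fun x => (a / x) ^ m :=
    (exp_sub_sum_range_succ_isLittleO_pow m).comp_tendsto
      (tendsto_const_nhds.div_atTop tendsto_id)
  have hbdd : (fun x : ℝ => x ^ m * (a / x) ^ m) =O[atTop] fun _ => (1 : ℝ) := by
    refine (isBigO_const_const (a ^ m) one_ne_zero atTop).congr' ?_ EventuallyEq.rfl
    filter_upwards [eventually_ne_atTop 0] with x hx
    rw [← mul_pow, mul_div_cancel₀ _ hx]
  have hrem : Tendsto (fun x : ℝ => x ^ m * (exp (a / x) - ∑ i ∈ range (m + 1), (a / x) ^ i / i !))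
      atTop (𝓝 0) :=
    (isLittleO_one_iff ℝ).mp (((isBigO_refl _ atTop).mul_isLittleO hlo).trans_isBigO hbdd)
  refine (add_zero (a ^ m / m !) ▸ hrem.const_add (a ^ m / m !)).congr' ?_
  filter_upwards [eventually_ne_atTop 0] with x hx
  have hlead : x ^ m * ((a / x) ^ m / m !) = a ^ m / m ! := by
    rw [mul_div_assoc', ← mul_pow, mul_div_cancel₀ _ hx]
  rw [sum_range_succ]
  linear_combination -hlead

theorem tendsto_pow_mul_sum_mul_exp_div {J : Type*} [Fintype J] (n a : J → ℝ) (m : ℕ)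
    (h : ∀ i < m, ∑ j, n j * a j ^ i = 0) :
    Tendsto (fun x : ℝ => x ^ m * ∑ j, n j * exp (a j / x))
      atTop (𝓝 ((1 / (m ! : ℝ)) * ∑ j, n j * a j ^ m)) := by
  have hterms := tendsto_finsetSum univ fun j _ =>
    (tendsto_pow_mul_exp_div_sub_sum_range m (a j)).const_mul (n j)
  have hlim : ∑ j, n j * (a j ^ m / m !) = (1 / (m ! : ℝ)) * ∑ j, n j * a j ^ m := by
    rw [mul_sum]
    exact sum_congr rfl fun j _ => by ring
  rw [hlim] at hterms
  refine hterms.congr fun x => ?_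
  have htaylor := sum_mul_sum_range_mul_pow_eq_zero n a h fun i => (x ^ i)⁻¹ / (i ! : ℝ)
  calc ∑ j, n j * (x ^ m * (exp (a j / x) - ∑ i ∈ range m, (a j / x) ^ i / i !))
      = x ^ m * ∑ j, n j * exp (a j / x)
        - x ^ m * ∑ j, n j * ∑ i ∈ range m, (x ^ i)⁻¹ / (i ! : ℝ) * a j ^ i := by
        rw [mul_sum, mul_sum, ← sum_sub_distrib]
        refine sum_congr rfl fun j _ => ?_
        rw [sum_congr rfl fun i _ => show (a j / x) ^ i / (i ! : ℝ) = (x ^ i)⁻¹ / i ! * a j ^ i by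
          ring]
        ring
    _ = x ^ m * ∑ j, n j * exp (a j / x) := by rw [htaylor, mul_zero, sub_zero]

theorem stmt_2_general (N : ℕ) (b : Fin N → ℝ) (hb : ∀ i, b i ≠ 0)
    {J : Type*} [Fintype J] (n a : J → ℝ) (m : ℕ)
    (h : ∀ i : ℕ, i < m → ∑ j : J, n j * a j ^ i = 0) :
    Filter.Tendsto
      (fun t : ℕ => (t : ℝ) ^ ((m : ℤ) - (N : ℤ)) *
        (∑ j : J, n j * Real.exp (a j / (t : ℝ))) /
        ∏ i : Fin N, (1 - Real.exp (-(b i) / (t : ℝ))))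
      Filter.atTop
      (nhds (((1 / (Nat.factorial m : ℝ)) * ∑ j : J, n j * a j ^ m) / ∏ i : Fin N, b i)) := by
  have hden : Tendsto (fun x : ℝ => ∏ i, x * (1 - exp (-b i / x))) atTop (𝓝 (∏ i, b i)) :=
    tendsto_finsetProd _ fun i _ => tendsto_mul_one_sub_exp_neg_div (b i)
  refine (((tendsto_pow_mul_sum_mul_exp_div n a m h).div hden
    (prod_ne_zero_iff.mpr fun i _ => hb i)).comp tendsto_natCast_atTop_atTop).congr' ?_
  filter_upwards [eventually_ne_atTop 0] with t ht
  have ht' : (t : ℝ) ≠ 0 := Nat.cast_ne_zero.mpr ht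
  simp only [Function.comp_apply, Pi.div_apply, prod_mul_distrib, prod_const, card_univ,
    Fintype.card_fin, zpow_sub₀ ht', zpow_natCast]
  field_simp

theorem stmt_2 (N : ℕ) (b : Fin N → ℝ) (hb : ∀ i, b i ≠ 0)
    {J : Type*} [Fintype J] (n a : J → ℝ) (m : ℕ) (hm : m ≤ N)
    (h : ∀ i : ℕ, i < m → ∑ j : J, n j * a j ^ i = 0) :
    Filter.Tendsto
      (fun t : ℕ => (t : ℝ) ^ ((m : ℤ) - (N : ℤ)) *
        (∑ j : J, n j * Real.exp (a j / (t : ℝ))) /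
        ∏ i : Fin N, (1 - Real.exp (-(b i) / (t : ℝ))))
      Filter.atTop
      (nhds (((1 / (Nat.factorial m : ℝ)) * ∑ j : J, n j * a j ^ m) / ∏ i : Fin N, b i)) :=
  stmt_2_general N b hb n a m h
end

section
/- Let d ≥ 1 and let k be a natural number with k < d. Let β : Fin k → ℝ have all partial sums c_j := β_0 + ⋯ + β_j strictly positive (0 ≤ j ≤ k−1), let N ∈ ℤ and x ∈ ℝ. Then, as the natural number t tends to infinity, (1/t^d) times the sum of the summable family exp((x + q_0β_0 + ⋯ + q_{k−1}β_{k−1})/t), indexed by strictly increasing integer tuples q : Fin k → ℤ with q_{k−1} < N, converges to 0. -/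
open Finset Filter

private lemma pi_hasSum : ∀ (k : ℕ) (f : Fin k → ℕ → ℝ), (∀ j n, 0 ≤ f j n) →
    (∀ j, Summable (f j)) →
    HasSum (fun a : Fin k → ℕ => ∏ j, f j (a j)) (∏ j, ∑' n, f j n) := by
  intro k
  induction k with
  | zero =>
    intro f _ _
    have h1 : (fun a : Fin 0 → ℕ => ∏ j, f j (a j)) = fun _ => (1 : ℝ) := by
      funext a; simp
    rw [h1]
    have := hasSum_fintype (fun _ : Fin 0 → ℕ => (1 : ℝ))
    simpa using this
  | succ n ih =>
    intro f h0 hs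
    set G : (Fin n → ℕ) → ℝ := fun b => ∏ j, f j.succ (b j) with hG
    have ihs : HasSum G (∏ j : Fin n, ∑' m, f j.succ m) :=
      ih (fun j => f j.succ) (fun j m => h0 _ _) (fun j => hs _)
    have h1n : (0:ℕ → ℝ) ≤ f 0 := fun m => h0 0 m
    have h2n : (0 : (Fin n → ℕ) → ℝ) ≤ G :=
      fun b => Finset.prod_nonneg fun j _ => h0 _ _
    have hprodsum : Summable (fun p : ℕ × (Fin n → ℕ) => f 0 p.1 * G p.2) :=
      Summable.mul_of_nonneg (hs 0) ihs.summable h1n h2n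
    have h1 : HasSum (fun p : ℕ × (Fin n → ℕ) => f 0 p.1 * G p.2)
        ((∑' m, f 0 m) * ∏ j : Fin n, ∑' m, f j.succ m) :=
      (hs 0).hasSum.mul ihs hprodsum
    set F : (Fin (n+1) → ℕ) → ℝ := fun a => ∏ j, f j (a j) with hF
    let e : ℕ × (Fin n → ℕ) ≃ (Fin (n+1) → ℕ) :=
      (Fin.consEquiv (fun _ : Fin (n+1) => ℕ))
    have hcomp : (F ∘ e) = fun p : ℕ × (Fin n → ℕ) => f 0 p.1 * G p.2 := by
      funext p
      simp [hF, hG, e, Fin.consEquiv, Fin.prod_univ_succ]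
    have h2 : HasSum F ((∑' m, f 0 m) * ∏ j : Fin n, ∑' m, f j.succ m) := by
      rw [← e.hasSum_iff, hcomp]; exact h1
    have h3 : (∏ j : Fin (n+1), ∑' m, f j m)
        = (∑' m, f 0 m) * ∏ j : Fin n, ∑' m, f j.succ m := by
      rw [Fin.prod_univ_succ]
    rw [h3]; exact h2

theorem stmt_4 (d k : ℕ) (hd : 1 ≤ d) (hk : k < d) (β : Fin k → ℝ)
    (hpos : ∀ j : Fin k, 0 < ∑ l ∈ Finset.Iic j, β l) (N : ℤ) (x : ℝ) :
    (∀ t : ℕ, 1 ≤ t →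
        Summable (fun q : {q : Fin k → ℤ // StrictMono q ∧ ∀ j, q j < N} =>
          Real.exp ((x + ∑ j : Fin k, (q.1 j : ℝ) * β j) / (t : ℝ)))) ∧
      Filter.Tendsto
        (fun t : ℕ => (1 / (t : ℝ) ^ d) *
          ∑' q : {q : Fin k → ℤ // StrictMono q ∧ ∀ j, q j < N},
            Real.exp ((x + ∑ j : Fin k, (q.1 j : ℝ) * β j) / (t : ℝ)))
        Filter.atTop (nhds 0) := by
  classical
  set c : Fin k → ℝ := fun j => ∑ l ∈ Finset.Iic j, β l with hc
  have hcpos : ∀ j, 0 < c j := fun j => hpos j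
  set K : ℝ := ∑ j : Fin k, ((N : ℝ) - ((k : ℝ) - ((j : ℕ) : ℝ))) * β j with hK
  set Φ : (Fin k → ℕ) → (Fin k → ℤ) :=
    fun a j => N - ((k : ℤ) - ((j : ℕ) : ℤ)) - ∑ l ∈ Finset.Ici j, (a l : ℤ) with hΦ
  have hlt : ∀ (a : Fin k → ℕ) (j : Fin k), Φ a j < N := by
    intro a j
    have h1 : ((j : ℕ) : ℤ) < (k : ℤ) := by exact_mod_cast j.isLt
    have h2 : (0:ℤ) ≤ ∑ l ∈ Finset.Ici j, (a l : ℤ) :=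
      Finset.sum_nonneg fun l _ => Int.natCast_nonneg _
    simp only [hΦ]; omega
  have hmono : ∀ a, StrictMono (Φ a) := by
    intro a j j' hjj'
    have hsub : Finset.Ici j' ⊆ Finset.Ici j := Finset.Ici_subset_Ici.mpr hjj'.le
    have hle : ∑ l ∈ Finset.Ici j', (a l : ℤ) ≤ ∑ l ∈ Finset.Ici j, (a l : ℤ) :=
      Finset.sum_le_sum_of_subset_of_nonneg hsub fun l _ _ => Int.natCast_nonneg _
    have hv : ((j:ℕ):ℤ) < ((j':ℕ):ℤ) := by exact_mod_cast hjj'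
    simp only [hΦ]; omega
  have hIoi : ∀ j : Fin k, Finset.Ioi j =
      if h : (j:ℕ)+1 < k then Finset.Ici (⟨(j:ℕ)+1, h⟩ : Fin k) else ∅ := by
    intro j
    split_ifs with h
    · ext l
      simp only [Finset.mem_Ioi, Finset.mem_Ici, Fin.lt_def, Fin.le_def]
      omega
    · ext l
      simp only [Finset.mem_Ioi, Finset.notMem_empty, iff_false, Fin.lt_def, not_lt]
      have := l.isLt; omega
  have hsplit : ∀ (u : Fin k → ℤ) (j : Fin k),
      ∑ l ∈ Finset.Ici j, u l = u j + ∑ l ∈ Finset.Ioi j, u l := by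
    intro u j
    rw [Finset.Ici_eq_cons_Ioi, Finset.sum_cons]
  have hinj : Function.Injective Φ := by
    intro a b hab
    have hS : ∀ j : Fin k,
        ∑ l ∈ Finset.Ici j, (a l : ℤ) = ∑ l ∈ Finset.Ici j, (b l : ℤ) := by
      intro j
      have h := congrFun hab j
      simp only [hΦ] at h
      omega
    funext j
    have hSIoi : ∑ l ∈ Finset.Ioi j, (a l : ℤ) = ∑ l ∈ Finset.Ioi j, (b l : ℤ) := by
      rw [hIoi j]
      split_ifs with h
      · exact hS _
      · simp
    have h1 := hsplit (fun l => (a l : ℤ)) j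
    have h2 := hsplit (fun l => (b l : ℤ)) j
    have h3 := hS j
    have : (a j : ℤ) = b j := by omega
    exact_mod_cast this
  have hsurj : ∀ q : Fin k → ℤ, StrictMono q → (∀ j, q j < N) → ∃ a, Φ a = q := by
    intro q hq1 hq2
    set b : Fin k → ℤ :=
      fun j => (if h : (j:ℕ)+1 < k then q ⟨(j:ℕ)+1, h⟩ else N) - q j - 1 with hb
    have hb0 : ∀ j, 0 ≤ b j := by
      intro j
      simp only [hb]
      split_ifs with h
      · have : q j < q ⟨(j:ℕ)+1, h⟩ := hq1 (by simp [Fin.lt_def])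
        omega
      · have := hq2 j; omega
    set a : Fin k → ℕ := fun j => (b j).toNat with ha
    have hab : ∀ j, (a j : ℤ) = b j := fun j => Int.toNat_of_nonneg (hb0 j)
    have main : ∀ m : ℕ, ∀ j : Fin k, k - 1 - (j:ℕ) = m →
        ∑ l ∈ Finset.Ici j, (a l : ℤ) = N - ((k:ℤ) - ((j:ℕ):ℤ)) - q j := by
      intro m
      induction m using Nat.strong_induction_on with
      | _ m IH =>
        intro j hj
        have hx := hsplit (fun l => (a l : ℤ)) j
        by_cases h : (j:ℕ)+1 < k
        · have hy : ∑ l ∈ Finset.Ioi j, (a l : ℤ)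
              = N - ((k:ℤ) - (((j:ℕ)+1 : ℕ):ℤ)) - q ⟨(j:ℕ)+1, h⟩ := by
            rw [hIoi j, dif_pos h]
            exact IH (k - 1 - ((j:ℕ)+1)) (by have := j.isLt; omega) ⟨(j:ℕ)+1, h⟩ rfl
          have hz := hab j
          simp only [hb, dif_pos h] at hz
          have hjk : ((j:ℕ):ℤ) < (k:ℤ) := by exact_mod_cast j.isLt
          rw [hx, hy, hz]
          push_cast
          ring
        · have hy : ∑ l ∈ Finset.Ioi j, (a l : ℤ) = 0 := by
            rw [hIoi j, dif_neg h]; simp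
          have hjk : (j:ℕ)+1 = k := by have := j.isLt; omega
          have hz := hab j
          simp only [hb, dif_neg h] at hz
          rw [hx, hy, hz]
          have : ((j:ℕ):ℤ) = (k:ℤ) - 1 := by omega
          rw [this]
          ring
    refine ⟨a, funext fun j => ?_⟩
    simp only [hΦ]
    rw [main (k - 1 - (j:ℕ)) j rfl]
    ring
  set Φ' : (Fin k → ℕ) → {q : Fin k → ℤ // StrictMono q ∧ ∀ j, q j < N} :=
    fun a => ⟨Φ a, hmono a, hlt a⟩ with hΦ'
  have hbij : Function.Bijective Φ' := by
    constructor
    · intro a b hab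
      exact hinj (congrArg Subtype.val hab)
    · rintro ⟨q, hq1, hq2⟩
      obtain ⟨a, ha⟩ := hsurj q hq1 hq2
      exact ⟨a, Subtype.ext ha⟩
  let e : (Fin k → ℕ) ≃ {q : Fin k → ℤ // StrictMono q ∧ ∀ j, q j < N} :=
    Equiv.ofBijective Φ' hbij
  have key : ∀ t : ℕ, 1 ≤ t →
      HasSum (fun q : {q : Fin k → ℤ // StrictMono q ∧ ∀ j, q j < N} =>
        Real.exp ((x + ∑ j : Fin k, (q.1 j : ℝ) * β j) / (t : ℝ)))
        (Real.exp ((x + K)/(t:ℝ)) *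
          ∏ j : Fin k, (1 - Real.exp (-(c j)/(t:ℝ)))⁻¹) := by
    intro t ht
    have hT : (1:ℝ) ≤ (t:ℝ) := by exact_mod_cast ht
    have hT0 : (0:ℝ) < t := by linarith
    set r : Fin k → ℝ := fun j => Real.exp (-(c j)/(t:ℝ)) with hr
    have hr0 : ∀ j, 0 ≤ r j := fun j => (Real.exp_pos _).le
    have hr1 : ∀ j, r j < 1 := by
      intro j
      rw [hr]
      apply Real.exp_lt_one_iff.mpr
      apply div_neg_of_neg_of_pos _ hT0
      have := hcpos j; linarith
    have hgeo : ∀ j : Fin k, HasSum (fun n : ℕ => r j ^ n) (1 - r j)⁻¹ :=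
      fun j => hasSum_geometric_of_lt_one (hr0 j) (hr1 j)
    have hpi : HasSum (fun a : Fin k → ℕ => ∏ j, r j ^ (a j))
        (∏ j : Fin k, (1 - r j)⁻¹) := by
      have h1 := pi_hasSum k (fun j n => r j ^ n)
        (fun j n => pow_nonneg (hr0 j) n) (fun j => (hgeo j).summable)
      have h2 : (∏ j : Fin k, ∑' n : ℕ, r j ^ n) = ∏ j : Fin k, (1 - r j)⁻¹ :=
        Finset.prod_congr rfl fun j _ => (hgeo j).tsum_eq
      rw [← h2]; exact h1
    have hg : HasSum (fun a : Fin k → ℕ =>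
        Real.exp ((x + K)/(t:ℝ)) * ∏ j, r j ^ (a j))
        (Real.exp ((x + K)/(t:ℝ)) * ∏ j : Fin k, (1 - r j)⁻¹) :=
      hpi.mul_left _
    have hfe : ∀ a : Fin k → ℕ,
        Real.exp ((x + ∑ j : Fin k, ((Φ a j : ℤ) : ℝ) * β j) / (t:ℝ))
          = Real.exp ((x + K)/(t:ℝ)) * ∏ j, r j ^ (a j) := by
      intro a
      have hswap : ∑ j : Fin k, ∑ l ∈ Finset.Ici j, (a l : ℝ) * β j
          = ∑ l : Fin k, (a l : ℝ) * c l := by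
        rw [Finset.sum_comm' (t' := Finset.univ) (s' := fun l => Finset.Iic l)
          (by intro j l; simp)]
        refine Finset.sum_congr rfl fun l _ => ?_
        rw [hc, Finset.mul_sum]
      have hcast : (fun j : Fin k => ((Φ a j : ℤ) : ℝ) * β j)
          = fun j : Fin k => (((N:ℝ) - ((k:ℝ) - ((j:ℕ):ℝ)))
              - ∑ l ∈ Finset.Ici j, (a l : ℝ)) * β j := by
        funext j; simp only [hΦ]; push_cast; ring
      have hsum : ∑ j : Fin k, ((Φ a j : ℤ) : ℝ) * β j
          = K - ∑ l : Fin k, (a l : ℝ) * c l := by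
        rw [hcast]
        simp only [sub_mul]
        rw [Finset.sum_sub_distrib]
        have h4 : ∑ j : Fin k, (∑ l ∈ Finset.Ici j, (a l : ℝ)) * β j
            = ∑ j : Fin k, ∑ l ∈ Finset.Ici j, (a l : ℝ) * β j :=
          Finset.sum_congr rfl fun j _ => by rw [Finset.sum_mul]
        rw [h4, hswap, hK]
        congr 1
        exact Finset.sum_congr rfl fun j _ => by ring
      rw [hsum]
      have hstep : (x + (K - ∑ l : Fin k, (a l : ℝ) * c l)) / (t:ℝ)
          = (x + K)/(t:ℝ) + ∑ l : Fin k, ((a l : ℕ) : ℝ) * (-(c l)/(t:ℝ)) := by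
        have hA : ∑ l : Fin k, ((a l : ℕ) : ℝ) * (-(c l)/(t:ℝ))
            = -((∑ l : Fin k, (a l : ℝ) * c l)/(t:ℝ)) := by
          rw [Finset.sum_div, ← Finset.sum_neg_distrib]
          exact Finset.sum_congr rfl fun l _ => by ring
        rw [hA]
        ring
      rw [hstep, Real.exp_add]
      congr 1
      rw [Real.exp_sum]
      refine Finset.prod_congr rfl fun l _ => ?_
      rw [Real.exp_nat_mul]
    refine e.hasSum_iff.mp ?_
    have hcomp : ((fun q : {q : Fin k → ℤ // StrictMono q ∧ ∀ j, q j < N} =>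
        Real.exp ((x + ∑ j : Fin k, (q.1 j : ℝ) * β j) / (t : ℝ))) ∘ e)
        = fun a : Fin k → ℕ =>
            Real.exp ((x + K)/(t:ℝ)) * ∏ j, r j ^ (a j) := by
      funext a
      simp only [Function.comp_apply]
      exact hfe a
    rw [hcomp]
    exact hg
  constructor
  · intro t ht
    exact (key t ht).summable
  · set B : ℝ := Real.exp |x + K| * ∏ j : Fin k, ((1 + c j)/c j) with hB
    have hB0 : 0 ≤ B := by
      rw [hB]
      apply mul_nonneg (Real.exp_pos _).le
      exact Finset.prod_nonneg fun j _ =>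
        div_nonneg (by linarith [hcpos j]) (hcpos j).le
    apply squeeze_zero'
      (Filter.Eventually.of_forall fun t =>
        mul_nonneg (by positivity) (tsum_nonneg fun q => (Real.exp_pos _).le))
      ?_ (tendsto_const_div_atTop_nhds_zero_nat B)
    filter_upwards [eventually_ge_atTop 1] with t ht
    have hT : (1:ℝ) ≤ (t:ℝ) := by exact_mod_cast ht
    have hT0 : (0:ℝ) < t := by linarith
    rw [(key t ht).tsum_eq]
    have hr1 : ∀ j : Fin k, Real.exp (-(c j)/(t:ℝ)) < 1 := by
      intro j
      apply Real.exp_lt_one_iff.mpr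
      apply div_neg_of_neg_of_pos _ hT0
      have := hcpos j; linarith
    have hfac : ∀ j : Fin k,
        (1 - Real.exp (-(c j)/(t:ℝ)))⁻¹ ≤ (t:ℝ) * ((1 + c j)/c j) := by
      intro j
      have hcj := hcpos j
      set u := c j / (t:ℝ) with hu
      have hu0 : 0 < u := by positivity
      have hneg : -(c j)/(t:ℝ) = -u := by rw [hu, neg_div]
      have h1 : u + 1 ≤ Real.exp u := by linarith [Real.add_one_le_exp u]
      have h2 : Real.exp (-u) ≤ (u + 1)⁻¹ := by
        rw [Real.exp_neg]
        exact inv_anti₀ (by linarith) h1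
      have h3' : 1 - (u+1)⁻¹ = u / (u+1) := by field_simp; ring
      have h3 : u / (u + 1) ≤ 1 - Real.exp (-u) := by linarith
      have h4 : 0 < u / (u + 1) := by positivity
      have h5 : (1 - Real.exp (-u))⁻¹ ≤ (u/(u+1))⁻¹ := inv_anti₀ h4 h3
      have h6 : (u/(u+1))⁻¹ = (u+1)/u := by rw [inv_div]
      have h7 : (u+1)/u = (c j + t)/(c j) := by
        rw [hu]; field_simp
      have h8 : (c j + t)/(c j) ≤ ((t:ℝ) * (1 + c j))/(c j) :=
        (div_le_div_iff_of_pos_right hcj).mpr (by nlinarith)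
      rw [hneg]
      calc (1 - Real.exp (-u))⁻¹ ≤ (u/(u+1))⁻¹ := h5
        _ = (c j + t)/(c j) := by rw [h6, h7]
        _ ≤ ((t:ℝ) * (1 + c j))/(c j) := h8
        _ = (t:ℝ) * ((1 + c j)/c j) := by rw [mul_div_assoc]
    have hP : (∏ j : Fin k, (1 - Real.exp (-(c j)/(t:ℝ)))⁻¹)
        ≤ (t:ℝ)^k * ∏ j : Fin k, ((1 + c j)/c j) := by
      calc (∏ j : Fin k, (1 - Real.exp (-(c j)/(t:ℝ)))⁻¹)
          ≤ ∏ j : Fin k, ((t:ℝ) * ((1 + c j)/c j)) :=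
            Finset.prod_le_prod
              (fun j _ => inv_nonneg.mpr (by linarith [hr1 j]))
              (fun j _ => hfac j)
        _ = (t:ℝ)^k * ∏ j : Fin k, ((1 + c j)/c j) := by
            rw [Finset.prod_mul_distrib, Finset.prod_const]
            simp
    have hE : Real.exp ((x + K)/(t:ℝ)) ≤ Real.exp |x + K| := by
      apply Real.exp_le_exp.mpr
      calc (x + K)/(t:ℝ) ≤ |x + K|/(t:ℝ) :=
            (div_le_div_iff_of_pos_right hT0).mpr (le_abs_self _)
        _ ≤ |x + K| := div_le_self (abs_nonneg _) hT
    have hPr : 0 ≤ ∏ j : Fin k, (1 - Real.exp (-(c j)/(t:ℝ)))⁻¹ :=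
      Finset.prod_nonneg fun j _ => inv_nonneg.mpr (by linarith [hr1 j])
    have hEP : Real.exp ((x + K)/(t:ℝ)) *
        ∏ j : Fin k, (1 - Real.exp (-(c j)/(t:ℝ)))⁻¹
        ≤ Real.exp |x + K| * ((t:ℝ)^k * ∏ j : Fin k, ((1 + c j)/c j)) :=
      mul_le_mul hE hP hPr (Real.exp_pos _).le
    have h9 : (t:ℝ)^k / (t:ℝ)^d ≤ 1 / (t:ℝ) := by
      have h10 : (t:ℝ)^d = (t:ℝ)^k * (t:ℝ)^(d-k) := by
        rw [← pow_add]
        congr 1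
        omega
      have h11 : (t:ℝ) ≤ (t:ℝ)^(d-k) := le_self_pow₀ hT (by omega)
      have hk0 : (0:ℝ) < (t:ℝ)^k := by positivity
      rw [h10, div_le_div_iff₀ (by positivity) hT0]
      nlinarith
    calc (1/(t:ℝ)^d) * (Real.exp ((x + K)/(t:ℝ)) *
          ∏ j : Fin k, (1 - Real.exp (-(c j)/(t:ℝ)))⁻¹)
        ≤ (1/(t:ℝ)^d) * (Real.exp |x + K| *
            ((t:ℝ)^k * ∏ j : Fin k, ((1 + c j)/c j))) :=
          mul_le_mul_of_nonneg_left hEP (by positivity)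
      _ = B * ((t:ℝ)^k / (t:ℝ)^d) := by rw [hB]; ring
      _ ≤ B * (1/(t:ℝ)) := mul_le_mul_of_nonneg_left h9 hB0
      _ = B / (t:ℝ) := by ring
end

section
/- In the polynomial ring ℂ[a,b,c] (e.g. MvPolynomial (Fin 3) ℂ with a, b, c the three variables), the family of polynomials consisting of a^{n₁}·c^{n₂}·(ab−c)^{n₃} for all (n₁,n₂,n₃) ∈ ℕ³, together with b^{m₁}·c^{n₂}·(ab−c)^{n₃} for all m₁ ≥ 1 and (n₂,n₃) ∈ ℕ², is a ℂ-basis of ℂ[a,b,c]: it is linearly independent and spans ℂ[a,b,c] as a ℂ-vector space. -/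
open MvPolynomial Finset

namespace Stmt9

noncomputable section

abbrev R3 := MvPolynomial (Fin 3) ℂ

def aa : R3 := X 0
def bb : R3 := X 1
def cc : R3 := X 2
def dd : R3 := aa * bb - cc

def M (α β n₂ n₃ s : ℕ) : Fin 3 →₀ ℕ :=
  Finsupp.single 0 (α + s) + Finsupp.single 1 (β + s) + Finsupp.single 2 (n₂ + n₃ - s)

lemma M_apply0 (α β n₂ n₃ s : ℕ) : M α β n₂ n₃ s 0 = α + s := by
  simp [M, Finsupp.single_apply]

lemma M_apply1 (α β n₂ n₃ s : ℕ) : M α β n₂ n₃ s 1 = β + s := by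
  simp [M, Finsupp.single_apply]

lemma M_apply2 (α β n₂ n₃ s : ℕ) : M α β n₂ n₃ s 2 = n₂ + n₃ - s := by
  simp [M, Finsupp.single_apply]

def g (α β n₂ n₃ : ℕ) : R3 := aa ^ α * bb ^ β * cc ^ n₂ * dd ^ n₃

lemma g_expand (α β n₂ n₃ : ℕ) :
    g α β n₂ n₃ = ∑ s ∈ range (n₃ + 1),
      monomial (M α β n₂ n₃ s) ((n₃.choose s : ℂ) * (-1) ^ (n₃ - s)) := by
  have hd : dd ^ n₃ = ∑ s ∈ range (n₃ + 1), (aa * bb) ^ s * (-cc) ^ (n₃ - s) * (n₃.choose s : R3) := by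
    rw [dd, sub_eq_add_neg, add_pow]
  rw [g, hd, Finset.mul_sum]
  refine Finset.sum_congr rfl fun s hs => ?_
  have hsle : s ≤ n₃ := Nat.lt_succ_iff.mp (Finset.mem_range.mp hs)
  have h1 : (-cc) ^ (n₃ - s) = (-1 : R3) ^ (n₃ - s) * cc ^ (n₃ - s) := by
    rw [neg_pow]
  have hmono : aa ^ (α + s) * bb ^ (β + s) * cc ^ (n₂ + n₃ - s)
      = monomial (M α β n₂ n₃ s) (1 : ℂ) := by
    rw [aa, bb, cc, X_pow_eq_monomial, X_pow_eq_monomial, X_pow_eq_monomial,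
      monomial_mul, monomial_mul, M]
    simp
  have hC : (n₃.choose s : R3) = C (n₃.choose s : ℂ) := by
    simp [map_natCast]
  calc aa ^ α * bb ^ β * cc ^ n₂ * ((aa * bb) ^ s * (-cc) ^ (n₃ - s) * (n₃.choose s : R3))
      = C (n₃.choose s : ℂ) * C ((-1 : ℂ) ^ (n₃ - s)) *
        (aa ^ (α + s) * bb ^ (β + s) * cc ^ (n₂ + (n₃ - s))) := by
        rw [h1, hC]
        simp only [map_pow, map_neg, map_one]
        ring
    _ = monomial (M α β n₂ n₃ s) ((n₃.choose s : ℂ) * (-1) ^ (n₃ - s)) := by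
        rw [show n₂ + (n₃ - s) = n₂ + n₃ - s by omega, hmono]
        rw [← C_mul, C_mul_monomial, mul_one]

lemma coeff_g_of_ne (α β n₂ n₃ : ℕ) (μ : Fin 3 →₀ ℕ)
    (h1 : β + n₃ ≤ μ 1) (h2 : μ ≠ M α β n₂ n₃ n₃) :
    coeff μ (g α β n₂ n₃) = 0 := by
  rw [g_expand, coeff_sum]
  refine Finset.sum_eq_zero fun s hs => ?_
  rw [coeff_monomial, if_neg, ]
  intro h
  have hsle : s ≤ n₃ := Nat.lt_succ_iff.mp (Finset.mem_range.mp hs)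
  have h1' : M α β n₂ n₃ s 1 = μ 1 := by rw [h]
  rw [M_apply1] at h1'
  have : s = n₃ := by omega
  exact h2 (by rw [← h, this])

lemma coeff_g_self (α β n₂ n₃ : ℕ) :
    coeff (M α β n₂ n₃ n₃) (g α β n₂ n₃) = 1 := by
  rw [g_expand, coeff_sum]
  rw [Finset.sum_eq_single n₃]
  · simp [coeff_monomial]
  · intro s hs hne
    rw [coeff_monomial, if_neg]
    intro h
    have h1' := congrArg (fun v : Fin 3 →₀ ℕ => v 1) h
    simp only [M_apply1] at h1'
    omega
  · intro h
    exact absurd (Finset.self_mem_range_succ n₃) h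

abbrev I := (ℕ × ℕ × ℕ) ⊕ ({m : ℕ // 1 ≤ m} × ℕ × ℕ)

def F : I → R3 := fun x => match x with
  | .inl (n₁, n₂, n₃) => aa ^ n₁ * cc ^ n₂ * (aa * bb - cc) ^ n₃
  | .inr (m₁, n₂, n₃) => bb ^ (m₁ : ℕ) * cc ^ n₂ * (aa * bb - cc) ^ n₃

def pa : I → ℕ := fun x => match x with
  | .inl (n₁, _, _) => n₁
  | .inr _ => 0

def pb : I → ℕ := fun x => match x with
  | .inl _ => 0
  | .inr (m₁, _, _) => (m₁ : ℕ)

def p2 : I → ℕ := fun x => match x with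
  | .inl (_, n₂, _) => n₂
  | .inr (_, n₂, _) => n₂

def p3 : I → ℕ := fun x => match x with
  | .inl (_, _, n₃) => n₃
  | .inr (_, _, n₃) => n₃

lemma F_eq (j : I) : F j = g (pa j) (pb j) (p2 j) (p3 j) := by
  obtain (⟨n₁, n₂, n₃⟩ | ⟨m₁, n₂, n₃⟩) := j <;>
    simp [F, g, pa, pb, p2, p3, dd]

def LM (j : I) : Fin 3 →₀ ℕ := M (pa j) (pb j) (p2 j) (p3 j) (p3 j)

def bexp (j : I) : ℕ := pb j + p3 j

lemma LM_apply1 (j : I) : LM j 1 = bexp j := by rw [LM, M_apply1]; rfl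

lemma LM_inj : Function.Injective LM := by
  intro j j' h
  have h0 := congrArg (fun v : Fin 3 →₀ ℕ => v 0) h
  have h1 := congrArg (fun v : Fin 3 →₀ ℕ => v 1) h
  have h2 := congrArg (fun v : Fin 3 →₀ ℕ => v 2) h
  simp only [LM, M_apply0, M_apply1, M_apply2] at h0 h1 h2
  obtain (⟨n₁, n₂, n₃⟩ | ⟨⟨m₁, hm₁⟩, n₂, n₃⟩) := j <;>
    obtain (⟨n₁', n₂', n₃'⟩ | ⟨⟨m₁', hm₁'⟩, n₂', n₃'⟩) := j' <;>
    simp only [pa, pb, p2, p3] at h0 h1 h2 ⊢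
  · obtain rfl : n₃ = n₃' := by omega
    obtain rfl : n₁ = n₁' := by omega
    obtain rfl : n₂ = n₂' := by omega
    rfl
  · omega
  · omega
  · obtain rfl : n₃ = n₃' := by omega
    obtain rfl : m₁ = m₁' := by omega
    obtain rfl : n₂ = n₂' := by omega
    rfl

lemma coeff_LM_self (j : I) : coeff (LM j) (F j) = 1 := by
  rw [F_eq, LM, coeff_g_self]

lemma coeff_LM_of_ne (j j' : I) (hle : bexp j' ≤ bexp j) (hne : j' ≠ j) :
    coeff (LM j) (F j') = 0 := by
  rw [F_eq]
  refine coeff_g_of_ne _ _ _ _ _ ?_ ?_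
  · rw [LM_apply1]; exact hle
  · intro h
    exact hne (LM_inj (by rw [LM, ← h]))

lemma step (l : I →₀ ℂ) (hl : Finsupp.linearCombination ℂ F l = 0) (j : I)
    (ih : ∀ j', bexp j < bexp j' → l j' = 0) : l j = 0 := by
  by_cases hmem : j ∈ l.support
  · have h0 : coeff (LM j) (Finsupp.linearCombination ℂ F l) = 0 := by rw [hl]; simp
    rw [Finsupp.linearCombination_apply, Finsupp.sum, coeff_sum] at h0
    simp only [coeff_smul] at h0
    rw [Finset.sum_eq_single j] at h0
    · rw [coeff_LM_self] at h0
      simpa using h0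
    · intro j' _ hne
      rcases lt_or_ge (bexp j) (bexp j') with h | h
      · rw [ih j' h, zero_smul]
      · rw [coeff_LM_of_ne j j' h hne, smul_zero]
    · intro h; exact absurd hmem h
  · exact Finsupp.notMem_support_iff.mp hmem

lemma li : LinearIndependent ℂ F := by
  rw [linearIndependent_iff]
  intro l hl
  have key : ∀ m : ℕ, ∀ j : I, l.support.sup bexp ≤ bexp j + m → l j = 0 := by
    intro m
    induction m with
    | zero =>
      intro j hj
      refine step l hl j fun j' hj' => ?_
      by_cases h : j' ∈ l.support
      · exact absurd (Finset.le_sup (f := bexp) h) (by omega)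
      · exact Finsupp.notMem_support_iff.mp h
    | succ m ihm =>
      intro j hj
      refine step l hl j fun j' hj' => ihm j' (by omega)
  ext j
  exact key (l.support.sup bexp) j (by omega)

lemma mem_span (i j k t : ℕ) :
    aa ^ i * bb ^ j * cc ^ k * dd ^ t ∈ Submodule.span ℂ (Set.range F) := by
  induction i generalizing j k t with
  | zero =>
    cases j with
    | zero =>
      refine Submodule.subset_span ⟨.inl (0, k, t), ?_⟩
      simp [F, dd]
    | succ j =>
      refine Submodule.subset_span ⟨.inr (⟨j + 1, by omega⟩, k, t), ?_⟩
      simp [F, dd]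
  | succ i ihi =>
    cases j with
    | zero =>
      refine Submodule.subset_span ⟨.inl (i + 1, k, t), ?_⟩
      simp [F, dd]
    | succ j =>
      have hsplit : aa ^ (i + 1) * bb ^ (j + 1) * cc ^ k * dd ^ t
          = aa ^ i * bb ^ j * cc ^ k * dd ^ (t + 1) + aa ^ i * bb ^ j * cc ^ (k + 1) * dd ^ t := by
        rw [dd]; ring
      rw [hsplit]
      exact Submodule.add_mem _ (ihi j k (t + 1)) (ihi j (k + 1) t)

lemma finsupp_decomp (u : Fin 3 →₀ ℕ) :
    u = Finsupp.single 0 (u 0) + Finsupp.single 1 (u 1) + Finsupp.single 2 (u 2) := by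
  ext i
  fin_cases i <;> simp [Finsupp.single_apply]

lemma span_top : Submodule.span ℂ (Set.range F) = ⊤ := by
  rw [eq_top_iff]
  intro p _
  induction p using MvPolynomial.induction_on' with
  | monomial u r =>
    have : monomial u r = r • (aa ^ (u 0) * bb ^ (u 1) * cc ^ (u 2) * dd ^ 0) := by
      rw [pow_zero, mul_one, aa, bb, cc, X_pow_eq_monomial, X_pow_eq_monomial,
        X_pow_eq_monomial, monomial_mul, monomial_mul, smul_monomial]
      rw [← finsupp_decomp u]
      simp
    rw [this]
    exact Submodule.smul_mem _ _ (mem_span (u 0) (u 1) (u 2) 0)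
  | add p q hp hq => exact Submodule.add_mem _ (hp trivial) (hq trivial)

end

end Stmt9

theorem stmt_9 :
    let a : MvPolynomial (Fin 3) ℂ := MvPolynomial.X 0
    let b : MvPolynomial (Fin 3) ℂ := MvPolynomial.X 1
    let c : MvPolynomial (Fin 3) ℂ := MvPolynomial.X 2
    let f : (ℕ × ℕ × ℕ) ⊕ ({m : ℕ // 1 ≤ m} × ℕ × ℕ) → MvPolynomial (Fin 3) ℂ :=
      fun x => match x with
        | .inl (n₁, n₂, n₃) => a ^ n₁ * c ^ n₂ * (a * b - c) ^ n₃
        | .inr (m₁, n₂, n₃) => b ^ (m₁ : ℕ) * c ^ n₂ * (a * b - c) ^ n₃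
    LinearIndependent ℂ f ∧ Submodule.span ℂ (Set.range f) = ⊤ := by
  intro a b c f
  have hf : f = Stmt9.F := by
    funext x
    obtain (⟨n₁, n₂, n₃⟩ | ⟨m₁, n₂, n₃⟩) := x <;> rfl
  rw [hf]
  exact ⟨Stmt9.li, Stmt9.span_top⟩
end

section
/- Fix a finite type I, positive integers d_i (i ∈ I), integers a_{ij} (i,j ∈ I) with a_{ii} = 2, a_{ij} ≤ 0 for i ≠ j, and d_i·a_{ij} = d_j·a_{ji}; set (α_i,α_j) := d_i·a_{ij}. Fix integers s_i (i ∈ I). Let Y_μ be the shifted Yangian: the unital associative ℂ-algebra presented by generators H_i^{(p)} (i ∈ I, p ∈ ℤ), E_i^{(r)}, F_i^{(r)} (i ∈ I, r ∈ ℤ_{≥0}) and the relations listed in the context. Then Y_μ is a finitely generated ℂ-algebra: it is generated by the finite set {E_i^{(0)}, F_i^{(0)} : i ∈ I} ∪ {H_i^{(p)} : i ∈ I, p ∈ {−s_i, −s_i+1} ∪ {q ∈ ℤ : −s_i+2 ≤ q ≤ −1}}. -/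
namespace ShiftedYangian

/-- Generators of the shifted Yangian. -/
inductive Gen (I : Type) : Type
  | H : I → ℤ → Gen I
  | E : I → ℕ → Gen I
  | F : I → ℕ → Gen I

/-- The free algebra on the generators. -/
abbrev FA (I : Type) := FreeAlgebra ℂ (Gen I)

noncomputable section

variable {I : Type} [DecidableEq I]

def hg (i : I) (p : ℤ) : FA I := FreeAlgebra.ι ℂ (Gen.H i p)
def eg (i : I) (r : ℕ) : FA I := FreeAlgebra.ι ℂ (Gen.E i r)
def fg (i : I) (r : ℕ) : FA I := FreeAlgebra.ι ℂ (Gen.F i r)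

/-- The commutator bracket. -/
def brk {R : Type*} [Ring R] (x y : R) : R := x * y - y * x

/-- Iterated bracket `[x₁,[x₂,…,[xₘ, y]…]]`. -/
def iterBrk {R : Type*} [Ring R] : List R → R → R
  | [], y => y
  | x :: xs, y => brk x (iterBrk xs y)

/-- The defining relations of the shifted Yangian `Y_μ(𝔤)`, where
`(α_i,α_j) = d i * a i j` and `s i` plays the role of `⟨α_i, μ⟩`. -/
inductive Rel (d : I → ℤ) (a : I → I → ℤ) (s : I → ℤ) : FA I → FA I → Prop
  | HH (i j : I) (p q : ℤ) : Rel d a s (brk (hg i p) (hg j q)) 0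
  | EF (i j : I) (r t : ℕ) :
      Rel d a s (brk (eg i r) (fg j t))
        (if i = j then (2 : FA I) * hg i (r + t) else 0)
  | HE (i j : I) (p : ℤ) (r : ℕ) :
      Rel d a s (brk (hg i (p + 1)) (eg j r) - brk (hg i p) (eg j (r + 1)))
        (((d i * a i j : ℤ) : FA I) * (hg i p * eg j r + eg j r * hg i p))
  | HF (i j : I) (p : ℤ) (r : ℕ) :
      Rel d a s (brk (hg i (p + 1)) (fg j r) - brk (hg i p) (fg j (r + 1)))
        (-(((d i * a i j : ℤ) : FA I) * (hg i p * fg j r + fg j r * hg i p)))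
  | EE (i j : I) (r t : ℕ) :
      Rel d a s (brk (eg i (r + 1)) (eg j t) - brk (eg i r) (eg j (t + 1)))
        (((d i * a i j : ℤ) : FA I) * (eg i r * eg j t + eg j t * eg i r))
  | FF (i j : I) (r t : ℕ) :
      Rel d a s (brk (fg i (r + 1)) (fg j t) - brk (fg i r) (fg j (t + 1)))
        (-(((d i * a i j : ℤ) : FA I) * (fg i r * fg j t + fg j t * fg i r)))
  | serreE (i j : I) (hij : i ≠ j) (r : Fin (1 - a i j).toNat → ℕ) (t : ℕ) :
      Rel d a s
        (∑ σ : Equiv.Perm (Fin (1 - a i j).toNat),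
          iterBrk (List.ofFn fun k => eg i (r (σ k))) (eg j t)) 0
  | serreF (i j : I) (hij : i ≠ j) (r : Fin (1 - a i j).toNat → ℕ) (t : ℕ) :
      Rel d a s
        (∑ σ : Equiv.Perm (Fin (1 - a i j).toNat),
          iterBrk (List.ofFn fun k => fg i (r (σ k))) (fg j t)) 0
  | Hlow (i : I) (p : ℤ) (hp : p < -s i - 1) : Rel d a s (hg i p) 0
  | Hnorm (i : I) : Rel d a s (hg i (-s i - 1)) 1

section Aux

variable {d : I → ℤ} {a : I → I → ℤ} {s : I → ℤ}

local notation "mk" => RingQuot.mkAlgHom ℂ (Rel d a s)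
local notation "Y" => RingQuot (Rel d a s)

theorem mrel {x y : FA I} (h : Rel d a s x y) : mk x = mk y :=
  RingQuot.mkAlgHom_rel ℂ h

theorem csmul (n : ℤ) (x : Y) : ((n : ℤ) : Y) * x = (n : ℂ) • x := by
  rw [Algebra.smul_def, map_intCast]

theorem two_mul_smul (x : Y) : (2 : Y) * x = (2 : ℂ) • x := by
  rw [Algebra.smul_def, map_ofNat]

theorem hone (i : I) : mk (hg i (-s i - 1)) = 1 := by
  simpa using mrel (Rel.Hnorm i)

theorem he1 (haii : ∀ i, a i i = 2) (i : I) (r : ℕ) :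
    mk (hg i (-s i)) * mk (eg i r) - mk (eg i r) * mk (hg i (-s i))
      = (4 * (d i : ℂ)) • mk (eg i r) := by
  have H := mrel (Rel.HE (d := d) (a := a) (s := s) i i (-s i - 1) r)
  rw [show -s i - 1 + 1 = -s i from by ring] at H
  simp only [brk, map_sub, map_mul, map_add, map_intCast, hone, one_mul, mul_one,
    sub_self, sub_zero, haii, csmul] at H
  rw [H]
  push_cast
  module

theorem hf1 (haii : ∀ i, a i i = 2) (i : I) (r : ℕ) :
    mk (hg i (-s i)) * mk (fg i r) - mk (fg i r) * mk (hg i (-s i))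
      = (-4 * (d i : ℂ)) • mk (fg i r) := by
  have H := mrel (Rel.HF (d := d) (a := a) (s := s) i i (-s i - 1) r)
  rw [show -s i - 1 + 1 = -s i from by ring] at H
  simp only [brk, map_sub, map_mul, map_add, map_neg, map_intCast, hone, one_mul, mul_one,
    sub_self, sub_zero, haii, csmul] at H
  rw [H]
  push_cast
  module

theorem ekey (haii : ∀ i, a i i = 2) (i : I) (r : ℕ) :
    ((2 : ℂ) • mk (hg i (-s i + 1)) - mk (hg i (-s i)) * mk (hg i (-s i))) * mk (eg i r)
      - mk (eg i r) * ((2 : ℂ) • mk (hg i (-s i + 1)) - mk (hg i (-s i)) * mk (hg i (-s i)))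
      = (8 * (d i : ℂ)) • mk (eg i (r + 1)) := by
  set h := mk (hg i (-s i))
  set h1 := mk (hg i (-s i + 1))
  set er := mk (eg i r)
  set er' := mk (eg i (r + 1))
  have z1 : h * er - er * h = (4 * (d i : ℂ)) • er := he1 haii i r
  have z1' : h * er' - er' * h = (4 * (d i : ℂ)) • er' := he1 haii i (r + 1)
  have H2 := mrel (Rel.HE (d := d) (a := a) (s := s) i i (-s i) r)
  simp only [brk, map_sub, map_mul, map_add, map_intCast, haii, csmul] at H2
  -- H2 : (h1 * er - er * h1) - (h * er' - er' * h) = ((d i * 2 : ℤ) : ℂ) • (h * er + er * h)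
  have expand :
      ((2 : ℂ) • h1 - h * h) * er - er * ((2 : ℂ) • h1 - h * h) - (8 * (d i : ℂ)) • er'
        = (2 : ℂ) • ((h1 * er - er * h1 - (h * er' - er' * h))
            - ((d i * 2 : ℤ) : ℂ) • (h * er + er * h))
          + (2 : ℂ) • (h * er' - er' * h - (4 * (d i : ℂ)) • er')
          - (h * (h * er - er * h - (4 * (d i : ℂ)) • er)
            + (h * er - er * h - (4 * (d i : ℂ)) • er) * h) := by
    push_cast
    simp only [mul_sub, sub_mul, mul_add, add_mul, smul_sub, smul_add, smul_smul,
      smul_mul_assoc, mul_smul_comm, mul_assoc]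
    module
  have hz : ((2 : ℂ) • h1 - h * h) * er - er * ((2 : ℂ) • h1 - h * h)
      - (8 * (d i : ℂ)) • er' = 0 := by
    rw [expand, H2, z1', z1]
    simp
    simp only [h, er]
    abel
  exact sub_eq_zero.mp hz

theorem fkey (haii : ∀ i, a i i = 2) (i : I) (r : ℕ) :
    ((2 : ℂ) • mk (hg i (-s i + 1)) - mk (hg i (-s i)) * mk (hg i (-s i))) * mk (fg i r)
      - mk (fg i r) * ((2 : ℂ) • mk (hg i (-s i + 1)) - mk (hg i (-s i)) * mk (hg i (-s i)))
      = (-8 * (d i : ℂ)) • mk (fg i (r + 1)) := by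
  set h := mk (hg i (-s i))
  set h1 := mk (hg i (-s i + 1))
  set er := mk (fg i r)
  set er' := mk (fg i (r + 1))
  have z1 : h * er - er * h = (-4 * (d i : ℂ)) • er := hf1 haii i r
  have z1' : h * er' - er' * h = (-4 * (d i : ℂ)) • er' := hf1 haii i (r + 1)
  have H2 := mrel (Rel.HF (d := d) (a := a) (s := s) i i (-s i) r)
  simp only [brk, map_sub, map_mul, map_add, map_neg, map_intCast, haii, csmul] at H2
  have expand :
      ((2 : ℂ) • h1 - h * h) * er - er * ((2 : ℂ) • h1 - h * h) - (-8 * (d i : ℂ)) • er'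
        = (2 : ℂ) • ((h1 * er - er * h1 - (h * er' - er' * h))
            - (-(((d i * 2 : ℤ) : ℂ) • (h * er + er * h))))
          + (2 : ℂ) • (h * er' - er' * h - (-4 * (d i : ℂ)) • er')
          - (h * (h * er - er * h - (-4 * (d i : ℂ)) • er)
            + (h * er - er * h - (-4 * (d i : ℂ)) • er) * h) := by
    push_cast
    simp only [mul_sub, sub_mul, mul_add, add_mul, smul_sub, smul_add, smul_neg, smul_smul,
      smul_mul_assoc, mul_smul_comm, mul_assoc]
    module
  have hz : ((2 : ℂ) • h1 - h * h) * er - er * ((2 : ℂ) • h1 - h * h)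
      - (-8 * (d i : ℂ)) • er' = 0 := by
    rw [expand, H2, z1', z1]
    simp
    simp only [h, er]
    abel
  exact sub_eq_zero.mp hz

theorem hpos (i : I) (n : ℕ) :
    mk (hg i (n : ℤ)) = (2 : ℂ)⁻¹ •
      (mk (eg i n) * mk (fg i 0) - mk (fg i 0) * mk (eg i n)) := by
  have H := mrel (Rel.EF (d := d) (a := a) (s := s) i i n 0)
  simp only [brk, map_sub, map_mul, eq_self_iff_true, if_true, map_ofNat, Nat.cast_zero, add_zero] at H
  rw [H, two_mul_smul, smul_smul]
  norm_num

end Aux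

section Main

variable (d : I → ℤ) (a : I → I → ℤ) (s : I → ℤ)

/-- The generating set. -/
def gensSet : Set (RingQuot (Rel d a s)) :=
  (Set.range fun i : I => RingQuot.mkAlgHom ℂ (Rel d a s) (eg i 0)) ∪
      (Set.range fun i : I => RingQuot.mkAlgHom ℂ (Rel d a s) (fg i 0)) ∪
    {x | ∃ (i : I) (p : ℤ),
      (p = -s i ∨ p = -s i + 1 ∨ (-s i + 2 ≤ p ∧ p ≤ -1)) ∧
      x = RingQuot.mkAlgHom ℂ (Rel d a s) (hg i p)}

theorem main [Fintype I] (hd : ∀ i, 0 < d i) (haii : ∀ i, a i i = 2) :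
    (gensSet d a s).Finite ∧ Algebra.adjoin ℂ (gensSet d a s) = ⊤ := by
  constructor
  · refine (Set.Finite.union (Set.finite_range _) (Set.finite_range _)).union ?_
    refine Set.Finite.subset
      (Set.finite_iUnion fun i : I =>
        (((Set.finite_Icc (-s i) (-s i + 1)).union (Set.finite_Icc (-s i + 2) (-1))).image
          fun p : ℤ => RingQuot.mkAlgHom ℂ (Rel d a s) (hg i p))) ?_
    rintro x ⟨i, p, hp, rfl⟩
    refine Set.mem_iUnion.2 ⟨i, ⟨p, ?_, rfl⟩⟩
    simp only [Set.mem_union, Set.mem_Icc]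
    omega
  · set A := Algebra.adjoin ℂ (gensSet d a s) with hA
    have hmemH : ∀ (i : I) (p : ℤ),
        (p = -s i ∨ p = -s i + 1 ∨ (-s i + 2 ≤ p ∧ p ≤ -1)) →
        RingQuot.mkAlgHom ℂ (Rel d a s) (hg i p) ∈ A :=
      fun i p hp => Algebra.subset_adjoin (Or.inr ⟨i, p, hp, rfl⟩)
    have hdne : ∀ i : I, (d i : ℂ) ≠ 0 := fun i =>
      Int.cast_ne_zero.mpr (hd i).ne'
    have hT : ∀ i : I,
        ((2 : ℂ) • RingQuot.mkAlgHom ℂ (Rel d a s) (hg i (-s i + 1)) -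
          RingQuot.mkAlgHom ℂ (Rel d a s) (hg i (-s i)) *
            RingQuot.mkAlgHom ℂ (Rel d a s) (hg i (-s i))) ∈ A := fun i =>
      A.sub_mem (A.smul_mem (hmemH i _ (Or.inr (Or.inl rfl))) _)
        (A.mul_mem (hmemH i _ (Or.inl rfl)) (hmemH i _ (Or.inl rfl)))
    have etop : ∀ (i : I) (r : ℕ), RingQuot.mkAlgHom ℂ (Rel d a s) (eg i r) ∈ A := by
      intro i r
      induction r with
      | zero => exact Algebra.subset_adjoin (Or.inl (Or.inl ⟨i, rfl⟩))
      | succ r ih =>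
        have key := ekey (d := d) (a := a) (s := s) haii i r
        have : RingQuot.mkAlgHom ℂ (Rel d a s) (eg i (r + 1)) =
            (8 * (d i : ℂ))⁻¹ • (((2 : ℂ) • RingQuot.mkAlgHom ℂ (Rel d a s) (hg i (-s i + 1)) -
              RingQuot.mkAlgHom ℂ (Rel d a s) (hg i (-s i)) *
                RingQuot.mkAlgHom ℂ (Rel d a s) (hg i (-s i))) *
              RingQuot.mkAlgHom ℂ (Rel d a s) (eg i r) -
              RingQuot.mkAlgHom ℂ (Rel d a s) (eg i r) *
              ((2 : ℂ) • RingQuot.mkAlgHom ℂ (Rel d a s) (hg i (-s i + 1)) -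
                RingQuot.mkAlgHom ℂ (Rel d a s) (hg i (-s i)) *
                  RingQuot.mkAlgHom ℂ (Rel d a s) (hg i (-s i)))) := by
          rw [key, smul_smul, inv_mul_cancel₀ (by simpa using hdne i), one_smul]
        rw [this]
        exact A.smul_mem (A.sub_mem (A.mul_mem (hT i) ih) (A.mul_mem ih (hT i))) _
    have ftop : ∀ (i : I) (r : ℕ), RingQuot.mkAlgHom ℂ (Rel d a s) (fg i r) ∈ A := by
      intro i r
      induction r with
      | zero => exact Algebra.subset_adjoin (Or.inl (Or.inr ⟨i, rfl⟩))
      | succ r ih =>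
        have key := fkey (d := d) (a := a) (s := s) haii i r
        have : RingQuot.mkAlgHom ℂ (Rel d a s) (fg i (r + 1)) =
            (-8 * (d i : ℂ))⁻¹ • (((2 : ℂ) • RingQuot.mkAlgHom ℂ (Rel d a s) (hg i (-s i + 1)) -
              RingQuot.mkAlgHom ℂ (Rel d a s) (hg i (-s i)) *
                RingQuot.mkAlgHom ℂ (Rel d a s) (hg i (-s i))) *
              RingQuot.mkAlgHom ℂ (Rel d a s) (fg i r) -
              RingQuot.mkAlgHom ℂ (Rel d a s) (fg i r) *
              ((2 : ℂ) • RingQuot.mkAlgHom ℂ (Rel d a s) (hg i (-s i + 1)) -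
                RingQuot.mkAlgHom ℂ (Rel d a s) (hg i (-s i)) *
                  RingQuot.mkAlgHom ℂ (Rel d a s) (hg i (-s i)))) := by
          rw [key, smul_smul, inv_mul_cancel₀ (by simpa using hdne i), one_smul]
        rw [this]
        exact A.smul_mem (A.sub_mem (A.mul_mem (hT i) ih) (A.mul_mem ih (hT i))) _
    have htop : ∀ (i : I) (p : ℤ), RingQuot.mkAlgHom ℂ (Rel d a s) (hg i p) ∈ A := by
      intro i p
      have hcase : p < -s i - 1 ∨ p = -s i - 1 ∨
          (p = -s i ∨ p = -s i + 1 ∨ (-s i + 2 ≤ p ∧ p ≤ -1)) ∨ 0 ≤ p := by omega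
      rcases hcase with hp | hp | hp | hp
      · have : RingQuot.mkAlgHom ℂ (Rel d a s) (hg i p) = 0 := by
          simpa using mrel (Rel.Hlow (d := d) (a := a) i p hp)
        rw [this]; exact A.zero_mem
      · rw [hp, hone]; exact A.one_mem
      · exact hmemH i p hp
      · obtain ⟨n, rfl⟩ : ∃ n : ℕ, p = (n : ℤ) := ⟨p.toNat, (Int.toNat_of_nonneg hp).symm⟩
        rw [hpos]
        exact A.smul_mem (A.sub_mem (A.mul_mem (etop i n) (ftop i 0))
          (A.mul_mem (ftop i 0) (etop i n))) _
    rw [eq_top_iff]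
    rintro x -
    obtain ⟨y, rfl⟩ := RingQuot.mkAlgHom_surjective ℂ (Rel d a s) x
    induction y using FreeAlgebra.induction with
    | grade0 c =>
      rw [AlgHom.commutes]
      exact A.algebraMap_mem c
    | grade1 g =>
      cases g with
      | H i p => exact htop i p
      | E i r => exact etop i r
      | F i r => exact ftop i r
    | mul x y hx hy => rw [map_mul]; exact A.mul_mem hx hy
    | add x y hx hy => rw [map_add]; exact A.add_mem hx hy

end Main


theorem stmt_11 {I : Type} [DecidableEq I] [Fintype I]
    (d : I → ℤ) (hd : ∀ i, 0 < d i)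
    (a : I → I → ℤ) (haii : ∀ i, a i i = 2)
    (haneg : ∀ i j, i ≠ j → a i j ≤ 0)
    (hsymm : ∀ i j, d i * a i j = d j * a j i)
    (s : I → ℤ) :
    let mk : FA I → RingQuot (Rel d a s) := RingQuot.mkAlgHom ℂ (Rel d a s)
    let gens : Set (RingQuot (Rel d a s)) :=
      (Set.range fun i : I => mk (eg i 0)) ∪ (Set.range fun i : I => mk (fg i 0)) ∪
        {x | ∃ (i : I) (p : ℤ),
          (p = -s i ∨ p = -s i + 1 ∨ (-s i + 2 ≤ p ∧ p ≤ -1)) ∧ x = mk (hg i p)}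
    gens.Finite ∧ Algebra.adjoin ℂ gens = ⊤ := by
  intro mk gens
  exact main d a s hd haii


end

end ShiftedYangian
end
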